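/- arXiv:2603.17537 — 2 statements merged into one kernel-verified Lean document; each statement's English description precedes it below -/
import Mathlib

section
/- (LCE acceleration for NGS/PGS, third case.) Let 1 ≤ l < k < r ≤ n be indices such that x_l ≻ x_k and x_m ≺ x_k for all m ∈ (l,k), and x_r ≻ x_k and x_m ≺ x_k for all m ∈ (k,r) (i.e., l = prev₋₁[k] and r = next₋₁[k]). If lce(l,k) > lce(k,r), then lce(l,r) = lce(k,r), x_r ≻ x_l, and min{j ∈ (l,n] : x_j ≻ x_l} = r. -/
/-!
Since `x_k` lies below both `x_l` and `x_r`, and agrees with `x_l` for longer than with `x_r`,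
the suffixes `x_l` and `x_r` split exactly where `x_k` and `x_r` do, and in the same direction:
hence `lce(l, r) = lce(k, r)` and `x_l ≺ x_r`. No `j ∈ (l, r)` can beat `x_l`, because each such
`x_j` is at most `x_k ≺ x_l`.
-/

namespace LynArr

variable {α : Type*} [LinearOrder α]

/-- Strict lexicographic order on words:
`u ≺ v` iff `u` is a proper prefix of `v`, or at the first differing position `u` is smaller. -/
def Llt (u v : List α) : Prop := List.Lex (· < ·) u v

/-- The suffix `x_i = x[i..n]` (1-based indexing). -/
def suff (x : List α) (i : ℕ) : List α := x.drop (i - 1)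

/-- The subword `x[i..j]` (1-based, inclusive). -/
def sub (x : List α) (i j : ℕ) : List α := (x.drop (i - 1)).take (j - i + 1)

/-- `w` is a Lyndon word: nonempty and lexicographically smaller than
all of its nonempty proper suffixes. -/
def IsLyndon (w : List α) : Prop :=
  w ≠ [] ∧ ∀ k, 0 < k → k < w.length → Llt w (w.drop k)

/-- `w` is an inverse Lyndon word: nonempty and lexicographically greater than
all of its nonempty proper suffixes. -/
def IsInvLyndon (w : List α) : Prop :=
  w ≠ [] ∧ ∀ k, 0 < k → k < w.length → Llt (w.drop k) w

/-- `lce x i j`: the length of the longest common prefix of the suffixes `x_i` and `x_j`. -/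
def lce (x : List α) (i j : ℕ) : ℕ :=
  (((suff x i).zip (suff x j)).takeWhile fun p => p.1 == p.2).length

section lcp

variable {β : Type*} [DecidableEq β]

def lcp (u v : List β) : ℕ :=
  ((u.zip v).takeWhile fun p => p.1 == p.2).length

@[simp]
lemma lcp_nil_left (v : List β) : lcp [] v = 0 := rfl

@[simp]
lemma lcp_nil_right (u : List β) : lcp u [] = 0 := by
  simp [lcp]

lemma lcp_cons_cons (a b : β) (u v : List β) :
    lcp (a :: u) (b :: v) = if a = b then lcp u v + 1 else 0 := by
  simp only [lcp, List.zip_cons_cons, List.takeWhile_cons, beq_iff_eq]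
  split <;> simp

theorem lcp_eq_and_lex_of_lcp_lt {r : β → β → Prop} [Std.Irrefl r] :
    ∀ {a b c : List β}, List.Lex r b a → List.Lex r b c → lcp b c < lcp a b →
      lcp a c = lcp b c ∧ List.Lex r a c
  | _, [], _, _, _, h => by simp at h
  | _, _ :: _, _, .rel hxy, _, h => by
    simp [lcp_cons_cons, (ne_of_irrefl hxy).symm] at h
  | _, _ :: _, _, .cons _, .rel hxz, _ => by
    refine ⟨?_, .rel hxz⟩
    simp [lcp_cons_cons, ne_of_irrefl hxz]
  | _, _ :: _, _, .cons hba, .cons hbc, h => by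
    simp only [lcp_cons_cons, if_true, Nat.add_lt_add_iff_right] at h ⊢
    obtain ⟨hac, hlex⟩ := lcp_eq_and_lex_of_lcp_lt hba hbc h
    exact ⟨by rw [hac], .cons hlex⟩

end lcp

lemma lce_eq_lcp (x : List α) (i j : ℕ) : lce x i j = lcp (suff x i) (suff x j) := rfl

theorem lce_acceleration_inverse_gt_general {α : Type*} [LinearOrder α] (x : List α) (n l k r : ℕ)
    (hlk : l < k) (hkr : k < r) (hrn : r ≤ n)
    (hlk' : Llt (suff x k) (suff x l))
    (hlk'' : ∀ m, l < m → m < k → Llt (suff x m) (suff x k))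
    (hkr' : Llt (suff x k) (suff x r))
    (hkr'' : ∀ m, k < m → m < r → Llt (suff x m) (suff x k))
    (hgt : lce x k r < lce x l k) :
    lce x l r = lce x k r ∧ Llt (suff x l) (suff x r) ∧
      IsLeast {j | l < j ∧ j ≤ n ∧ Llt (suff x l) (suff x j)} r := by
  simp only [lce_eq_lcp] at hgt ⊢
  obtain ⟨hlce, hlr⟩ := lcp_eq_and_lex_of_lcp_lt hlk' hkr' hgt
  refine ⟨hlce, hlr, ⟨hlk.trans hkr, hrn, hlr⟩, ?_⟩
  rintro j ⟨hlj, -, hlj'⟩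
  by_contra! hjr
  have hjl : suff x j < suff x l := by
    rcases lt_trichotomy j k with hjk | rfl | hkj
    · exact lt_trans (hlk'' j hlj hjk) hlk'
    · exact hlk'
    · exact lt_trans (hkr'' j hkj hjr) hlk'
  exact lt_asymm hjl hlj'

/-- LCE acceleration for NGS/PGS, third case: with `l = prev₋₁[k]`, `r = next₋₁[k]`
and `lce(l, k) > lce(k, r)`, we get `lce(l, r) = lce(k, r)`, `x_r ≻ x_l`, and
`next₋₁[l] = r`. -/
theorem lce_acceleration_inverse_gt {α : Type*} [LinearOrder α] (x : List α) (n l k r : ℕ)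
    (hn : n = x.length)
    (hl1 : 1 ≤ l) (hlk : l < k) (hkr : k < r) (hrn : r ≤ n)
    (hlk' : Llt (suff x k) (suff x l))
    (hlk'' : ∀ m, l < m → m < k → Llt (suff x m) (suff x k))
    (hkr' : Llt (suff x k) (suff x r))
    (hkr'' : ∀ m, k < m → m < r → Llt (suff x m) (suff x k))
    (hgt : lce x k r < lce x l k) :
    lce x l r = lce x k r ∧ Llt (suff x l) (suff x r) ∧
      IsLeast {j | l < j ∧ j ≤ n ∧ Llt (suff x l) (suff x j)} r :=
  lce_acceleration_inverse_gt_general x n l k r hlk hkr hrn hlk' hlk'' hkr' hkr'' hgt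

end LynArr
end

section
/- (Suffix comparison via the inverse Lyndon array.) Let 1 ≤ i ≤ n, let m = λ⁻¹[i], let z = x[i..i+m−1] be the maximal inverse Lyndon subword starting at i, assume i + m − 1 < n, and let b = border(z). Then: (1) for every k with i < k < i + m − b, x_i ≻ x_k; and (2) x_i ≺ x_{i+m−b}. -/
/-!
Write `x_i = z ++ c :: t`. By maximality `z ++ [c]` is not inverse Lyndon, which yields a border
`z.take ℓ` with `z.drop ℓ < [c]`. If `ℓ < b`, the suffix `z.drop (b - ℓ) = z.take ℓ ++ z.drop b` is
smaller than `z = z.take ℓ ++ z.drop ℓ`, so also `z.drop b < [c]`, i.e. `z[b] < c`: this is (2).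
For (1), a suffix `z.drop d` with `0 < d < m - b` is smaller than `z` and is not a prefix of `z`
(it would be a border longer than `b`), so the comparison is decided inside `z` and survives
appending `c :: t`.
-/

namespace List

variable {α β : Type*} [LinearOrder α]

theorem append_lt_append_iff_left (p : List α) {u v : List α} : p ++ u < p ++ v ↔ u < v := by
  induction p with
  | nil => rfl
  | cons a p ih => simpa using ih

theorem append_lt_append_of_lt_of_not_prefix {u v : List α} (h : u < v) (hp : ¬ u <+: v)
    (w w' : List α) : u ++ w < v ++ w' := by
  induction h with
  | nil => exact absurd nil_prefix hp
  | rel hab => exact Lex.rel hab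
  | cons _ ih => exact Lex.cons (ih fun h => hp (cons_prefix_cons.mpr ⟨rfl, h⟩))

theorem append_lt_cons_of_lt_singleton {u : List α} {c : α} (hu : u ≠ []) (h : u < [c])
    (w t : List α) : u ++ w < c :: t := by
  obtain ⟨a, r, rfl⟩ := exists_cons_of_ne_nil hu
  exact Lex.rel (by simpa [cons_lt_cons_iff] using h)

theorem drop_eq_take_of_drop_prefix {k : ℕ} {z : List β} (hp : z.drop k <+: z) :
    z.drop k = z.take (z.length - k) := by
  rw [prefix_iff_eq_take.mp hp, length_drop]

end List

namespace LynArr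

open List

variable {α : Type*}

theorem sub_eq_take_suff (x : List α) (i : ℕ) {m : ℕ} (hm : 1 ≤ m) :
    sub x i (i + m - 1) = (suff x i).take m := by
  simp only [sub, suff]
  congr 1
  omega

theorem suff_add (x : List α) {i : ℕ} (hi : 1 ≤ i) (d : ℕ) :
    suff x (i + d) = (suff x i).drop d := by
  simp only [suff, drop_drop]
  congr 1
  omega

variable [LinearOrder α] {z : List α}

theorem IsInvLyndon.drop_lt (hz : IsInvLyndon z) {k : ℕ} (hk0 : 0 < k) (hk : k < z.length) :
    z.drop k < z :=
  hz.2 k hk0 hk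

theorem IsInvLyndon.drop_append_lt_append (hz : IsInvLyndon z) {k : ℕ} (hk0 : 0 < k)
    (hk : k < z.length) (hnp : ¬ z.drop k <+: z) (t : List α) : z.drop k ++ t < z ++ t :=
  append_lt_append_of_lt_of_not_prefix (hz.drop_lt hk0 hk) hnp t t

theorem IsInvLyndon.exists_prefix_drop_lt_of_not_isInvLyndon_append (hz : IsInvLyndon z)
    {c : α} (hzc : ¬ IsInvLyndon (z ++ [c])) :
    ∃ k, 0 < k ∧ k ≤ z.length ∧ z.drop k <+: z ∧ z < z.drop k ++ [c] := by
  obtain ⟨k, hk0, hk, hge⟩ : ∃ k, 0 < k ∧ k ≤ z.length ∧ z ++ [c] ≤ (z ++ [c]).drop k := by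
    simpa [IsInvLyndon, Llt] using hzc
  rw [drop_append_of_le_length hk] at hge
  have hprefix : z.drop k <+: z := by
    rcases hk.lt_or_eq with hk | rfl
    · by_contra hnp
      exact (hz.drop_append_lt_append hk0 hk hnp [c]).not_ge hge
    · simp
  have hlt : z < z ++ [c] := by simpa using (append_lt_append_iff_left z).2 (nil_lt_cons c [])
  exact ⟨k, hk0, hk, hprefix, hlt.trans_le hge⟩

theorem IsInvLyndon.drop_lt_drop_of_border_lt (hz : IsInvLyndon z) {l b : ℕ} (hlb : l < b)
    (hb : b < z.length) (hl : z.take l = z.drop (z.length - l))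
    (hb2 : z.take b = z.drop (z.length - b)) : z.drop b < z.drop l := by
  have hsplit : z.drop (b - l) = z.take l ++ z.drop b :=
    calc z.drop (b - l) = (z.take b ++ z.drop b).drop (b - l) := by rw [take_append_drop]
      _ = (z.take b).drop (b - l) ++ z.drop b := drop_append_of_le_length (by simp; omega)
      _ = z.take l ++ z.drop b := by rw [hb2, drop_drop, hl]; congr 2; omega
  rw [← append_lt_append_iff_left (z.take l), ← hsplit, take_append_drop]
  exact hz.drop_lt (by omega) (by omega)

theorem IsInvLyndon.drop_lt_singleton_of_not_isInvLyndon_append (hz : IsInvLyndon z) {c : α}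
    (hzc : ¬ IsInvLyndon (z ++ [c])) {b : ℕ} (hb : b < z.length)
    (hb2 : z.take b = z.drop (z.length - b))
    (hb3 : ∀ b', b' < z.length → z.take b' = z.drop (z.length - b') → b' ≤ b) :
    z.drop b < [c] := by
  obtain ⟨k, hk0, hk, hprefix, hlt⟩ := hz.exists_prefix_drop_lt_of_not_isInvLyndon_append hzc
  have hborder := drop_eq_take_of_drop_prefix hprefix
  set l := z.length - k
  have hl : z.take l = z.drop (z.length - l) := by
    rw [show z.length - l = k by omega, hborder]
  have hdl : z.drop l < [c] := by
    rw [hborder] at hlt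
    nth_rewrite 1 [← take_append_drop l z] at hlt
    exact (append_lt_append_iff_left _).1 hlt
  rcases (hb3 l (by omega) hl).lt_or_eq with hlb | rfl
  · exact (hz.drop_lt_drop_of_border_lt hlb hb hl hb2).trans hdl
  · exact hdl

theorem IsInvLyndon.drop_append_lt_append_of_lt_sub_border (hz : IsInvLyndon z) {b d : ℕ}
    (hb3 : ∀ b', b' < z.length → z.take b' = z.drop (z.length - b') → b' ≤ b)
    (hd0 : 0 < d) (hd : d < z.length - b) (t : List α) : z.drop d ++ t < z ++ t :=
  hz.drop_append_lt_append hd0 (by omega) (fun hp => by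
    have hlong := hb3 (z.length - d) (by omega)
      (by rw [← drop_eq_take_of_drop_prefix hp]; congr 1; omega)
    omega) t

theorem IsInvLyndon.append_cons_lt_take_append_cons (hz : IsInvLyndon z) {c : α}
    (hzc : ¬ IsInvLyndon (z ++ [c])) {b : ℕ} (hb : b < z.length)
    (hb2 : z.take b = z.drop (z.length - b))
    (hb3 : ∀ b', b' < z.length → z.take b' = z.drop (z.length - b') → b' ≤ b) (t : List α) :
    z ++ c :: t < z.take b ++ c :: t :=
  calc z ++ c :: t = z.take b ++ (z.drop b ++ c :: t) := by rw [← append_assoc, take_append_drop]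
    _ < z.take b ++ c :: t := (append_lt_append_iff_left _).2 <|
      append_lt_cons_of_lt_singleton (by simp; omega)
        (hz.drop_lt_singleton_of_not_isInvLyndon_append hzc hb hb2 hb3) _ _

theorem suffix_comparison_inverse_general {α : Type*} [LinearOrder α] (x : List α) (n i m b : ℕ)
    (hn : n = x.length) (hi1 : 1 ≤ i)
    (hm1 : 1 ≤ m)
    (hIL : IsInvLyndon (sub x i (i + m - 1)))
    (hmax : ∀ m', m < m' → m' ≤ n - i + 1 → ¬ IsInvLyndon (sub x i (i + m' - 1)))
    (hproper : i + m - 1 < n)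
    (hb1 : b < (sub x i (i + m - 1)).length)
    (hb2 : (sub x i (i + m - 1)).take b =
      (sub x i (i + m - 1)).drop ((sub x i (i + m - 1)).length - b))
    (hb3 : ∀ b', b' < (sub x i (i + m - 1)).length →
      (sub x i (i + m - 1)).take b' =
        (sub x i (i + m - 1)).drop ((sub x i (i + m - 1)).length - b') → b' ≤ b) :
    (∀ k, i < k → k < i + m - b → Llt (suff x k) (suff x i)) ∧
      Llt (suff x i) (suff x (i + m - b)) := by
  rw [sub_eq_take_suff x i hm1] at hIL hb1 hb2 hb3
  set z := (suff x i).take m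
  obtain ⟨c, t, ht⟩ : ∃ c t, (suff x i).drop m = c :: t :=
    exists_cons_of_ne_nil (by simp [suff]; omega)
  have hsplit : suff x i = z ++ c :: t := by rw [← ht, take_append_drop]
  have hzlen : z.length = m := by simp [z, suff]; omega
  have hzc : ¬ IsInvLyndon (z ++ [c]) := by
    have hext : sub x i (i + (m + 1) - 1) = z ++ [c] := by
      rw [sub_eq_take_suff x i (by omega), take_add, ht]
      rfl
    exact hext ▸ hmax (m + 1) (by omega) (by omega)
  refine ⟨fun k hik hkb => ?_, ?_⟩
  · obtain ⟨d, rfl⟩ : ∃ d, k = i + d := ⟨k - i, by omega⟩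
    rw [suff_add x hi1, hsplit, drop_append_of_le_length (by omega)]
    exact hIL.drop_append_lt_append_of_lt_sub_border hb3 (by omega) (by omega) _
  · rw [show i + m - b = i + (m - b) by omega, suff_add x hi1, hsplit,
      drop_append_of_le_length (by omega), ← hzlen, ← hb2]
    exact hIL.append_cons_lt_take_append_cons hzc hb1 hb2 hb3 t

/-- Suffix comparison via the inverse Lyndon array: with `m = λ⁻¹[i]`,
`z = x[i..i+m-1]` a proper prefix of `x_i`, and `b = border(z)`:
every `k` with `i < k < i + m - b` satisfies `x_i ≻ x_k`, and `x_i ≺ x_{i+m-b}`. -/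
theorem suffix_comparison_inverse {α : Type*} [LinearOrder α] (x : List α) (n i m b : ℕ)
    (hn : n = x.length) (hi1 : 1 ≤ i) (hin : i ≤ n)
    (hm1 : 1 ≤ m) (hm2 : m ≤ n - i + 1)
    (hIL : IsInvLyndon (sub x i (i + m - 1)))
    (hmax : ∀ m', m < m' → m' ≤ n - i + 1 → ¬ IsInvLyndon (sub x i (i + m' - 1)))
    (hproper : i + m - 1 < n)
    (hb1 : b < (sub x i (i + m - 1)).length)
    (hb2 : (sub x i (i + m - 1)).take b =
      (sub x i (i + m - 1)).drop ((sub x i (i + m - 1)).length - b))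
    (hb3 : ∀ b', b' < (sub x i (i + m - 1)).length →
      (sub x i (i + m - 1)).take b' =
        (sub x i (i + m - 1)).drop ((sub x i (i + m - 1)).length - b') → b' ≤ b) :
    (∀ k, i < k → k < i + m - b → Llt (suff x k) (suff x i)) ∧
      Llt (suff x i) (suff x (i + m - b)) :=
  suffix_comparison_inverse_general x n i m b hn hi1 hm1 hIL hmax hproper hb1 hb2 hb3

end LynArr
end
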